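/- Assume 0 < a < π/2. There exists a constant A* > 0, depending only on a, S, 𝓔̃(h(·,0)) = (1/2)·∫_{−a}^{a} ( h_x(x,0)² − h(x,0)² − (4/(3S))·x·h(x,0) ) dx, and M = ∫_{−a}^{a} h(x,0) dx, such that every nonnegative classical periodic solution h of the regularized Model II equation on [0,T] satisfying the additional boundary condition obeys ∫_{−a}^{a} h_x(x,t)² dx ≤ A* and ∫_{−a}^{a} h(x,t)² dx ≤ (2a/π)²·A* + M²/(2a) for all t ∈ [0,T]. In particular, the H¹(Ω) norm of h(·,t) is bounded uniformly in t, T, and ε > 0. -/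

import Mathlib

/-!
The energy `𝓔̃ = ½∫ (h_x² - h² - (4/(3S)) x h)` is a Lyapunov functional: writing the equation as
`h_t + ∂ₓ[S (h³+ε) ∂ₓ w] = 0` with `w = h + h_xx + 2x/(3S)`, one has `d𝓔̃/dt = -∫ h_t w
= -∫ S (h³+ε) (∂ₓ w)² ≤ 0`, and `d/dt ∫ h = 0`; the boundary terms vanish by periodicity and the
extra boundary condition, which says exactly that `∂ₓ w = 0` at `±a`. The Wirtinger inequality
`∫ h² ≤ (2a/π)² ∫ h_x² + M²/(2a)` (on a period starting at a point where `h` equals its mean)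
lets `∫ h_x²` absorb `-∫ h²` in the energy because `2a < π`, and `h ≥ 0` gives
`∫ x h ≤ a M`; so `𝓔̃(t) ≤ 𝓔̃(0)` bounds `∫ h_x²`, and then `∫ h²`.
-/

/-- A classical periodic solution of the regularized Model II equation
`h_t = -2h² h_x - S ∂_x[(h³+ε)(h_x+h_xxx)]` on `ℝ × [0,T]`, `2a`-periodic in `x`,
with continuous partial derivatives `∂_x^j h`, `0 ≤ j ≤ 4`, and `∂_t h`. -/
structure ClassicalSolutionII (a S ε T : ℝ) (h hx hxx hxxx hxxxx ht : ℝ → ℝ → ℝ) : Prop where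
  periodic_x : ∀ x t, h (x + 2 * a) t = h x t
  cont_h : ContinuousOn (fun p : ℝ × ℝ => h p.1 p.2) (Set.univ ×ˢ Set.Icc 0 T)
  cont_hx : ContinuousOn (fun p : ℝ × ℝ => hx p.1 p.2) (Set.univ ×ˢ Set.Icc 0 T)
  cont_hxx : ContinuousOn (fun p : ℝ × ℝ => hxx p.1 p.2) (Set.univ ×ˢ Set.Icc 0 T)
  cont_hxxx : ContinuousOn (fun p : ℝ × ℝ => hxxx p.1 p.2) (Set.univ ×ˢ Set.Icc 0 T)
  cont_hxxxx : ContinuousOn (fun p : ℝ × ℝ => hxxxx p.1 p.2) (Set.univ ×ˢ Set.Icc 0 T)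
  cont_ht : ContinuousOn (fun p : ℝ × ℝ => ht p.1 p.2) (Set.univ ×ˢ Set.Icc 0 T)
  deriv_hx : ∀ x : ℝ, ∀ t ∈ Set.Icc (0:ℝ) T, HasDerivAt (fun y => h y t) (hx x t) x
  deriv_hxx : ∀ x : ℝ, ∀ t ∈ Set.Icc (0:ℝ) T, HasDerivAt (fun y => hx y t) (hxx x t) x
  deriv_hxxx : ∀ x : ℝ, ∀ t ∈ Set.Icc (0:ℝ) T, HasDerivAt (fun y => hxx y t) (hxxx x t) x
  deriv_hxxxx : ∀ x : ℝ, ∀ t ∈ Set.Icc (0:ℝ) T, HasDerivAt (fun y => hxxx y t) (hxxxx x t) x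
  deriv_ht : ∀ x : ℝ, ∀ t ∈ Set.Icc (0:ℝ) T,
    HasDerivWithinAt (fun s => h x s) (ht x t) (Set.Icc 0 T) t
  /-- The PDE `h_t = -2h² h_x - S ∂_x[(h³+ε)(h_x+h_xxx)]`, stated as: the flux
  `S (h³+ε)(h_x+h_xxx)` has spatial derivative `-h_t - 2h² h_x`. -/
  pde : ∀ x : ℝ, ∀ t ∈ Set.Icc (0:ℝ) T,
    HasDerivAt (fun y => S * (((h y t) ^ 3 + ε) * (hx y t + hxxx y t)))
      (-(ht x t) - 2 * (h x t)^2 * hx x t) x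

open Set MeasureTheory Filter Topology Real Function

theorem sq_mul_integral_sq_le_integral_deriv_sq {f f' : ℝ → ℝ} {c d k : ℝ}
    (hf : ∀ x, HasDerivAt f (f' x) x) (hf' : Continuous f') (hc : f c = 0) (hd : f d = 0)
    (hcd : c ≤ d) (hk : 0 < k) (hkπ : k * (d - c) < π) :
    k ^ 2 * ∫ x in c..d, f x ^ 2 ≤ ∫ x in c..d, f' x ^ 2 := by
  have hfc : Continuous f := continuous_iff_continuousAt.2 fun x => (hf x).continuousAt
  -- the phase is shifted so that `sin φ > 0` on all of `[c, d]`
  let φ : ℝ → ℝ := fun x => k * (x - c) + (π - k * (d - c)) / 2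
  have hφ : ∀ x, HasDerivAt φ k x := fun x => by
    simpa [φ] using (((hasDerivAt_id x).sub_const c).const_mul k).add_const ((π - k * (d - c)) / 2)
  have hsin : ∀ x ∈ uIcc c d, sin (φ x) ≠ 0 := by
    intro x hx
    rw [uIcc_of_le hcd] at hx
    have := mul_le_mul_of_nonneg_left (sub_le_sub_right hx.2 c) hk.le
    refine (sin_pos_of_pos_of_lt_pi ?_ ?_).ne' <;> simp only [φ]
    · nlinarith [mul_nonneg hk.le (sub_nonneg.2 hx.1)]
    · linarith
  let r : ℝ → ℝ := fun x => cos (φ x) / sin (φ x)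
  have hr : ContinuousOn r (uIcc c d) :=
    (continuous_cos.comp_continuousOn (by fun_prop)).div
      (continuous_sin.comp_continuousOn (by fun_prop)) hsin
  have hB : ∀ x ∈ uIcc c d, HasDerivAt (fun x => k * r x * f x ^ 2)
      (f' x ^ 2 - k ^ 2 * f x ^ 2 - (f' x - k * r x * f x) ^ 2) x := by
    intro x hx
    refine ((((hφ x).cos.div (hφ x).sin (hsin x hx)).const_mul k).mul
      ((hf x).pow 2)).congr_deriv ?_
    simp only [r, Pi.div_apply, Pi.pow_apply]
    field_simp [hsin x hx]
    ring
  have hint : ∀ {F : ℝ → ℝ}, Continuous F → IntervalIntegrable F volume c d :=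
    fun hF => hF.intervalIntegrable c d
  have hW : ContinuousOn (fun x => f' x ^ 2 - k ^ 2 * f x ^ 2 - (f' x - k * r x * f x) ^ 2)
      (uIcc c d) := by fun_prop
  have hWint : ∫ x in c..d, (f' x ^ 2 - k ^ 2 * f x ^ 2 - (f' x - k * r x * f x) ^ 2) = 0 := by
    rw [intervalIntegral.integral_eq_sub_of_hasDerivAt hB hW.intervalIntegrable]
    simp [hc, hd]
  have hWle : ∫ x in c..d, (f' x ^ 2 - k ^ 2 * f x ^ 2 - (f' x - k * r x * f x) ^ 2)
      ≤ ∫ x in c..d, (f' x ^ 2 - k ^ 2 * f x ^ 2) :=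
    intervalIntegral.integral_mono_on hcd hW.intervalIntegrable (hint (by fun_prop))
      fun x _ => sub_le_self _ (sq_nonneg _)
  have hsplit : ∫ x in c..d, (f' x ^ 2 - k ^ 2 * f x ^ 2)
      = (∫ x in c..d, f' x ^ 2) - k ^ 2 * ∫ x in c..d, f x ^ 2 := by
    rw [intervalIntegral.integral_sub (hint (by fun_prop)) (hint (by fun_prop)),
      intervalIntegral.integral_const_mul]
  linarith

theorem integral_sq_le_of_eq_zero_of_eq_zero {f f' : ℝ → ℝ} {c d : ℝ}
    (hf : ∀ x, HasDerivAt f (f' x) x) (hf' : Continuous f') (hc : f c = 0) (hd : f d = 0)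
    (hcd : c < d) :
    ∫ x in c..d, f x ^ 2 ≤ ((d - c) / π) ^ 2 * ∫ x in c..d, f' x ^ 2 := by
  have hL : 0 < d - c := sub_pos.2 hcd
  have hlim : Tendsto (fun k => k ^ 2 * ∫ x in c..d, f x ^ 2) (𝓝[<] (π / (d - c)))
      (𝓝 ((π / (d - c)) ^ 2 * ∫ x in c..d, f x ^ 2)) :=
    ((continuous_pow 2).mul continuous_const).continuousAt.tendsto.mono_left nhdsWithin_le_nhds
  have hsharp : (π / (d - c)) ^ 2 * ∫ x in c..d, f x ^ 2 ≤ ∫ x in c..d, f' x ^ 2 := by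
    refine le_of_tendsto hlim ?_
    filter_upwards [Ioo_mem_nhdsLT (div_pos pi_pos hL)] with k hk
    exact sq_mul_integral_sq_le_integral_deriv_sq hf hf' hc hd hcd.le hk.1
      ((lt_div_iff₀ hL).1 hk.2)
  calc ∫ x in c..d, f x ^ 2
      = ((d - c) / π) ^ 2 * ((π / (d - c)) ^ 2 * ∫ x in c..d, f x ^ 2) := by
        field_simp
    _ ≤ ((d - c) / π) ^ 2 * ∫ x in c..d, f' x ^ 2 := by gcongr

theorem Function.Periodic.of_hasDerivAt {f f' : ℝ → ℝ} {p : ℝ} (hper : Periodic f p)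
    (hf : ∀ x, HasDerivAt f (f' x) x) : Periodic f' p := fun x => by
  have := (hf (x + p)).comp_add_const x p
  rw [show (fun y => f (y + p)) = f from funext hper] at this
  exact this.unique (hf x)

theorem integral_sq_le_of_periodic {g g' : ℝ → ℝ} {b p : ℝ} (hp : 0 < p)
    (hg : ∀ x, HasDerivAt g (g' x) x) (hg' : Continuous g') (hper : Periodic g p) :
    ∫ x in b..b + p, g x ^ 2
      ≤ (p / π) ^ 2 * (∫ x in b..b + p, g' x ^ 2) + (∫ x in b..b + p, g x) ^ 2 / p := by
  have hgc : Continuous g := continuous_iff_continuousAt.2 fun x => (hg x).continuousAt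
  set m := ∫ x in b..b + p, g x
  obtain ⟨c, -, hc⟩ := exists_eq_interval_average (by linarith : b ≠ b + p) hgc.continuousOn
  rw [interval_average_eq_div, add_sub_cancel_left] at hc
  have hP := integral_sq_le_of_eq_zero_of_eq_zero (f := fun x => g x - m / p)
    (fun x => (hg x).sub_const _) hg' (by simp [m, hc]) (by simp [m, hper c, hc])
    (by linarith : c < c + p)
  have hshift : ∫ x in c..c + p, (g x - m / p) ^ 2 = ∫ x in b..b + p, (g x - m / p) ^ 2 :=
    (hper.comp fun y => (y - m / p) ^ 2).intervalIntegral_add_eq c b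
  have hshift' : ∫ x in c..c + p, g' x ^ 2 = ∫ x in b..b + p, g' x ^ 2 :=
    ((hper.of_hasDerivAt hg).comp fun y => y ^ 2).intervalIntegral_add_eq c b
  rw [add_sub_cancel_left, hshift, hshift'] at hP
  have hexp : ∫ x in b..b + p, (g x - m / p) ^ 2 = (∫ x in b..b + p, g x ^ 2) - m ^ 2 / p := by
    have hint : ∀ {F : ℝ → ℝ}, Continuous F → IntervalIntegrable F volume b (b + p) :=
      fun hF => hF.intervalIntegrable _ _
    simp only [sub_sq]
    rw [intervalIntegral.integral_add (hint (by fun_prop)) (hint (by fun_prop)),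
      intervalIntegral.integral_sub (hint (by fun_prop)) (hint (by fun_prop)),
      intervalIntegral.integral_mul_const, intervalIntegral.integral_const_mul]
    simp only [intervalIntegral.integral_const, add_sub_cancel_left, smul_eq_mul]
    field_simp
    ring
  linarith

theorem integral_id_mul_le_mul_integral {g : ℝ → ℝ} {b d : ℝ} (hbd : b ≤ d) (hg : Continuous g)
    (hg0 : ∀ x ∈ Icc b d, 0 ≤ g x) :
    ∫ x in b..d, x * g x ≤ d * ∫ x in b..d, g x := by
  rw [← intervalIntegral.integral_const_mul]
  exact intervalIntegral.integral_mono_on hbd ((continuous_id.mul hg).intervalIntegrable _ _)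
    ((continuous_const.mul hg).intervalIntegrable _ _)
    fun x hx => mul_le_mul_of_nonneg_right hx.2 (hg0 x hx)

section ParametricIntegral

variable {T : ℝ}

theorem continuous_slice_of_continuousOn {u : ℝ → ℝ → ℝ}
    (hu : ContinuousOn (uncurry u) (univ ×ˢ Icc 0 T)) {t : ℝ} (ht : t ∈ Icc 0 T) :
    Continuous (u · t) :=
  continuousOn_univ.1 <| hu.comp (continuous_id.prodMk continuous_const).continuousOn
    fun x _ => ⟨mem_univ x, ht⟩

theorem continuousOn_slice_of_continuousOn {u : ℝ → ℝ → ℝ}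
    (hu : ContinuousOn (uncurry u) (univ ×ˢ Icc 0 T)) (x : ℝ) :
    ContinuousOn (u x ·) (Icc 0 T) :=
  hu.comp (continuous_const.prodMk continuous_id).continuousOn fun _ ht => ⟨mem_univ x, ht⟩

/-- Only the increments of `G` are prescribed, against a weight `v` that may depend on `t₀`:
this is what lets `∫ h_x²` be differentiated in time without knowing `∂_t h_x`. -/
theorem hasDerivWithinAt_of_sub_eq_integral {u ut v : ℝ → ℝ → ℝ} {G : ℝ → ℝ} {b d t₀ : ℝ}
    (ht₀ : t₀ ∈ Icc 0 T)
    (hu : ContinuousOn (uncurry u) (univ ×ˢ Icc 0 T))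
    (hut : ∀ x t, t ∈ Icc 0 T → HasDerivWithinAt (u x ·) (ut x t) (Icc 0 T) t)
    (hut_cont : ContinuousOn (uncurry ut) (univ ×ˢ Icc 0 T))
    (hv : ContinuousOn (uncurry v) (univ ×ˢ Icc 0 T))
    (hG : ∀ s ∈ Icc 0 T, G s - G t₀ = ∫ x in b..d, (u x s - u x t₀) * v x s) :
    HasDerivWithinAt G (∫ x in b..d, ut x t₀ * v x t₀) (Icc 0 T) t₀ := by
  have hK : IsCompact (uIcc b d ×ˢ Icc 0 T) := isCompact_uIcc.prod isCompact_Icc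
  obtain ⟨C₁, hC₁⟩ := hK.exists_bound_of_continuousOn (hut_cont.mono (prod_mono (subset_univ _) le_rfl))
  obtain ⟨C₂, hC₂⟩ := hK.exists_bound_of_continuousOn (hv.mono (prod_mono (subset_univ _) le_rfl))
  have hmem : ∀ᶠ s in 𝓝[Icc 0 T \ {t₀}] t₀, s ∈ Icc 0 T ∧ s ≠ t₀ :=
    eventually_nhdsWithin_of_forall fun s hs => hs
  rw [hasDerivWithinAt_iff_tendsto_slope]
  refine (intervalIntegral.tendsto_integral_filter_of_dominated_convergence
    (F := fun s x => slope (u x ·) t₀ s * v x s) (fun _ => C₁ * C₂) ?_ ?_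
    intervalIntegrable_const ?_).congr' ?_
  · filter_upwards [hmem] with s hs
    have := continuous_slice_of_continuousOn hu hs.1
    have := continuous_slice_of_continuousOn hu ht₀
    have := continuous_slice_of_continuousOn hv hs.1
    refine Continuous.aestronglyMeasurable ?_
    simp only [slope_def_field]
    fun_prop
  · filter_upwards [hmem] with s hs
    refine ae_of_all _ fun x hx => ?_
    have hx' : x ∈ uIcc b d := uIoc_subset_uIcc hx
    have hmvt : ‖u x s - u x t₀‖ ≤ C₁ * ‖s - t₀‖ :=
      (convex_Icc 0 T).norm_image_sub_le_of_norm_hasDerivWithin_le (fun τ hτ => hut x τ hτ)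
        (fun τ hτ => hC₁ (x, τ) ⟨hx', hτ⟩) ht₀ hs.1
    rw [norm_mul, slope_def_field, norm_div]
    gcongr
    · exact (norm_nonneg _).trans (hC₁ (x, t₀) ⟨hx', ht₀⟩)
    · rwa [div_le_iff₀ (norm_pos_iff.2 (sub_ne_zero.2 hs.2))]
    · exact hC₂ (x, s) ⟨hx', hs.1⟩
  · refine ae_of_all _ fun x _ => ?_
    exact (hasDerivWithinAt_iff_tendsto_slope.1 (hut x t₀ ht₀)).mul
      ((continuousOn_slice_of_continuousOn hv x t₀ ht₀).tendsto.mono_left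
        (nhdsWithin_mono _ sdiff_subset))
  · filter_upwards [hmem] with s hs
    rw [slope_def_field, hG s hs.1, ← intervalIntegral.integral_div]
    refine intervalIntegral.integral_congr fun x _ => ?_
    simp only [slope_def_field]
    ring

end ParametricIntegral

noncomputable def modelIIPotential (S : ℝ) (h hxx : ℝ → ℝ → ℝ) (x t : ℝ) : ℝ :=
  h x t + hxx x t + 2 / (3 * S) * x

noncomputable def modelIIFlux (S ε : ℝ) (h hx hxxx : ℝ → ℝ → ℝ) (x t : ℝ) : ℝ :=
  S * (h x t ^ 3 + ε) * (hx x t + hxxx x t + 2 / (3 * S))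

def ModelIIBoundaryCondition (a S : ℝ) (hx hxxx : ℝ → ℝ → ℝ) (t : ℝ) : Prop :=
  a * (hx a t + hxxx a t + 2 / (3 * S)) + a * (hx (-a) t + hxxx (-a) t + 2 / (3 * S)) = 0

/-- The paper's `𝓔̃(h(·,t))`. -/
noncomputable def modelIIEnergy (a S : ℝ) (h hx : ℝ → ℝ → ℝ) (t : ℝ) : ℝ :=
  (1/2) * (∫ x in (-a)..a, ((hx x t)^2 - (h x t)^2 - (4 / (3 * S)) * x * h x t))

theorem two_mul_modelIIEnergy {a S t : ℝ} {h hx : ℝ → ℝ → ℝ} (hh : Continuous (h · t))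
    (hhx : Continuous (hx · t)) :
    2 * modelIIEnergy a S h hx t = (∫ x in (-a)..a, hx x t ^ 2) - (∫ x in (-a)..a, h x t ^ 2)
      - 4 / (3 * S) * ∫ x in (-a)..a, x * h x t := by
  have hint : ∀ {F : ℝ → ℝ}, Continuous F → IntervalIntegrable F volume (-a) a :=
    fun hF => hF.intervalIntegrable _ _
  simp only [modelIIEnergy, mul_assoc (4 / (3 * S))]
  rw [intervalIntegral.integral_sub (hint (by fun_prop)) (hint (by fun_prop)),
    intervalIntegral.integral_sub (hint (by fun_prop)) (hint (by fun_prop)),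
    intervalIntegral.integral_const_mul]
  ring

namespace ClassicalSolutionII

variable {a S ε T t : ℝ} {h hx hxx hxxx hxxxx ht : ℝ → ℝ → ℝ}

theorem periodic_hx (sol : ClassicalSolutionII a S ε T h hx hxx hxxx hxxxx ht)
    (htT : t ∈ Icc 0 T) : Periodic (hx · t) (2 * a) :=
  Periodic.of_hasDerivAt (fun x => sol.periodic_x x t) fun x => sol.deriv_hx x t htT

theorem periodic_hxxx (sol : ClassicalSolutionII a S ε T h hx hxx hxxx hxxxx ht)
    (htT : t ∈ Icc 0 T) : Periodic (hxxx · t) (2 * a) :=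
  (sol.periodic_hx htT |>.of_hasDerivAt fun x => sol.deriv_hxx x t htT).of_hasDerivAt
    fun x => sol.deriv_hxxx x t htT

theorem hasDerivAt_modelIIFlux (sol : ClassicalSolutionII a S ε T h hx hxx hxxx hxxxx ht)
    (hS : S ≠ 0) (htT : t ∈ Icc 0 T) (x : ℝ) :
    HasDerivAt (modelIIFlux S ε h hx hxxx · t) (-ht x t) x := by
  -- the flux exceeds the one in `pde` by `(2/3)(h³+ε)`, whose derivative is the term `2h²h_x`
  have hcubic := (((sol.deriv_hx x t htT).pow 3).add_const ε).const_mul (2 / 3)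
  refine ((sol.pde x t htT).add hcubic).congr_of_eventuallyEq (Eventually.of_forall fun y => ?_)
    |>.congr_deriv ?_
  · simp only [modelIIFlux, Pi.add_apply, Pi.pow_apply]
    field_simp
  · push_cast
    ring

theorem modelIIFlux_eq_zero (sol : ClassicalSolutionII a S ε T h hx hxx hxxx hxxxx ht)
    (ha : a ≠ 0) (htT : t ∈ Icc 0 T)
    (hbc : ModelIIBoundaryCondition a S hx hxxx t) :
    modelIIFlux S ε h hx hxxx (-a) t = 0 ∧ modelIIFlux S ε h hx hxxx a t = 0 := by
  have hshift : -a + 2 * a = a := by ring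
  have hx_eq : hx a t = hx (-a) t := by simpa only [hshift] using sol.periodic_hx htT (-a)
  have hxxx_eq : hxxx a t = hxxx (-a) t := by simpa only [hshift] using sol.periodic_hxxx htT (-a)
  rw [ModelIIBoundaryCondition, ← hx_eq, ← hxxx_eq, ← two_mul, ← mul_assoc, mul_eq_zero] at hbc
  have hslope := hbc.resolve_left (by positivity)
  simp [modelIIFlux, ← hx_eq, ← hxxx_eq, hslope]

theorem integral_ht_eq_zero (sol : ClassicalSolutionII a S ε T h hx hxx hxxx hxxxx ht)
    (hS : S ≠ 0) (ha : a ≠ 0) (htT : t ∈ Icc 0 T)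
    (hbc : ModelIIBoundaryCondition a S hx hxxx t) :
    ∫ x in (-a)..a, ht x t = 0 := by
  obtain ⟨hleft, hright⟩ := sol.modelIIFlux_eq_zero ha htT hbc
  rw [intervalIntegral.integral_eq_sub_of_hasDerivAt
    (fun x _ => (sol.hasDerivAt_modelIIFlux hS htT x).neg.congr_deriv (neg_neg _))
    ((continuous_slice_of_continuousOn sol.cont_ht htT).intervalIntegrable _ _)]
  simp [hleft, hright]

theorem integral_ht_mul_modelIIPotential_nonneg
    (sol : ClassicalSolutionII a S ε T h hx hxx hxxx hxxxx ht)
    (hS : 0 < S) (hε : 0 ≤ ε) (ha : 0 < a) (htT : t ∈ Icc 0 T) (hpos : ∀ x, 0 ≤ h x t)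
    (hbc : ModelIIBoundaryCondition a S hx hxxx t) :
    0 ≤ ∫ x in (-a)..a, ht x t * modelIIPotential S h hxx x t := by
  obtain ⟨hleft, hright⟩ := sol.modelIIFlux_eq_zero ha.ne' htT hbc
  have hpot : ∀ x, HasDerivAt (modelIIPotential S h hxx · t)
      (hx x t + hxxx x t + 2 / (3 * S)) x := fun x =>
    ((sol.deriv_hx x t htT).add (sol.deriv_hxxx x t htT)).add
      (((hasDerivAt_id x).const_mul (2 / (3 * S))).congr_deriv (mul_one _))
  have := continuous_slice_of_continuousOn sol.cont_hx htT
  have := continuous_slice_of_continuousOn sol.cont_hxxx htT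
  -- integrating by parts moves `∂ₓ` from the flux onto the potential
  have hibp := intervalIntegral.integral_mul_deriv_eq_deriv_mul (a := -a) (b := a)
    (fun x _ => sol.hasDerivAt_modelIIFlux hS.ne' htT x) (fun x _ => hpot x)
    ((continuous_slice_of_continuousOn sol.cont_ht htT).neg.intervalIntegrable _ _)
    ((by fun_prop : Continuous fun x => hx x t + hxxx x t + 2 / (3 * S)).intervalIntegrable _ _)
  have hflux : ∫ x in (-a)..a, ht x t * modelIIPotential S h hxx x t
      = ∫ x in (-a)..a, modelIIFlux S ε h hx hxxx x t * (hx x t + hxxx x t + 2 / (3 * S)) := by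
    simp [hibp, hleft, hright, intervalIntegral.integral_neg]
  rw [hflux]
  refine intervalIntegral.integral_nonneg (by linarith) fun x _ => ?_
  have := hpos x
  rw [modelIIFlux, mul_assoc]
  exact mul_nonneg (by positivity) (mul_self_nonneg _)

theorem modelIIEnergy_sub (sol : ClassicalSolutionII a S ε T h hx hxx hxxx hxxxx ht)
    {s : ℝ} (hs : s ∈ Icc 0 T) (htT : t ∈ Icc 0 T) :
    modelIIEnergy a S h hx s - modelIIEnergy a S h hx t
      = ∫ x in (-a)..a, (h x s - h x t)
          * -((modelIIPotential S h hxx x s + modelIIPotential S h hxx x t) / 2) := by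
  have := continuous_slice_of_continuousOn sol.cont_h hs
  have := continuous_slice_of_continuousOn sol.cont_h htT
  have := continuous_slice_of_continuousOn sol.cont_hx hs
  have := continuous_slice_of_continuousOn sol.cont_hx htT
  have := continuous_slice_of_continuousOn sol.cont_hxx hs
  have := continuous_slice_of_continuousOn sol.cont_hxx htT
  have hint : ∀ {F : ℝ → ℝ}, Continuous F → IntervalIntegrable F volume (-a) a :=
    fun hF => hF.intervalIntegrable _ _
  have hshift : -a + 2 * a = a := by ring
  have hbdry : ∀ τ ∈ Icc 0 T, h a τ = h (-a) τ ∧ hx a τ = hx (-a) τ := fun τ hτ =>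
    ⟨by simpa only [hshift] using sol.periodic_x (-a) τ,
      by simpa only [hshift] using sol.periodic_hx hτ (-a)⟩
  -- `∫ (h_x(s)² - h_x(t)²)` integrated by parts, the boundary terms cancelling by periodicity
  have hibp := intervalIntegral.integral_mul_deriv_eq_deriv_mul (a := -a) (b := a)
    (u := fun x => h x s - h x t) (v := fun x => hx x s + hx x t)
    (fun x _ => (sol.deriv_hx x s hs).sub (sol.deriv_hx x t htT))
    (fun x _ => (sol.deriv_hxx x s hs).add (sol.deriv_hxx x t htT))
    (hint (by fun_prop)) (hint (by fun_prop))
  rw [(hbdry s hs).1, (hbdry s hs).2, (hbdry t htT).1, (hbdry t htT).2, sub_self, zero_sub]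
    at hibp
  have hdiff : modelIIEnergy a S h hx s - modelIIEnergy a S h hx t
      = ∫ x in (-a)..a, (1 / 2) * (((hx x s) ^ 2 - (h x s) ^ 2 - (4 / (3 * S)) * x * h x s)
          - ((hx x t) ^ 2 - (h x t) ^ 2 - (4 / (3 * S)) * x * h x t)) := by
    rw [intervalIntegral.integral_const_mul, intervalIntegral.integral_sub (hint (by fun_prop))
      (hint (by fun_prop)), modelIIEnergy, modelIIEnergy, mul_sub]
  have hzero : ∫ x in (-a)..a, ((h x s - h x t) * (hxx x s + hxx x t)
      + (hx x s - hx x t) * (hx x s + hx x t)) = 0 := by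
    rw [intervalIntegral.integral_add (hint (by fun_prop)) (hint (by fun_prop)), hibp]
    ring
  simp only [modelIIPotential]
  rw [hdiff, ← sub_eq_zero, ← intervalIntegral.integral_sub (hint (by fun_prop))
    (hint (by fun_prop))]
  refine (intervalIntegral.integral_congr (g := fun x => (1 / 2) * ((h x s - h x t)
    * (hxx x s + hxx x t) + (hx x s - hx x t) * (hx x s + hx x t))) fun x _ => ?_).trans ?_
  · simp only
    ring
  · rw [intervalIntegral.integral_const_mul, hzero, mul_zero]

theorem modelIIEnergy_antitoneOn (sol : ClassicalSolutionII a S ε T h hx hxx hxxx hxxxx ht)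
    (hS : 0 < S) (hε : 0 ≤ ε) (ha : 0 < a) (hpos : ∀ x, ∀ t ∈ Icc 0 T, 0 ≤ h x t)
    (hbc : ∀ t ∈ Icc 0 T, ModelIIBoundaryCondition a S hx hxxx t) :
    AntitoneOn (modelIIEnergy a S h hx) (Icc 0 T) := by
  have hderiv : ∀ t ∈ Icc 0 T, HasDerivWithinAt (modelIIEnergy a S h hx)
      (-∫ x in (-a)..a, ht x t * modelIIPotential S h hxx x t) (Icc 0 T) t := by
    intro t htT
    have := sol.cont_h
    have := sol.cont_hxx
    have := continuous_slice_of_continuousOn sol.cont_h htT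
    have := continuous_slice_of_continuousOn sol.cont_hxx htT
    have hv : ContinuousOn (uncurry fun x s =>
        -((modelIIPotential S h hxx x s + modelIIPotential S h hxx x t) / 2))
        (univ ×ˢ Icc 0 T) := by
      simp only [modelIIPotential]
      fun_prop
    convert hasDerivWithinAt_of_sub_eq_integral htT sol.cont_h sol.deriv_ht sol.cont_ht hv
      fun s hs => sol.modelIIEnergy_sub hs htT using 1
    rw [← intervalIntegral.integral_neg]
    exact intervalIntegral.integral_congr fun x _ => by ring
  exact antitoneOn_of_hasDerivWithinAt_nonpos (convex_Icc 0 T)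
    (fun t htT => (hderiv t htT).continuousWithinAt)
    (fun t htT => (hderiv t (interior_subset htT)).mono interior_subset)
    fun t htT => neg_nonpos.2 <| sol.integral_ht_mul_modelIIPotential_nonneg hS hε ha
      (interior_subset htT) (hpos · t (interior_subset htT)) (hbc t (interior_subset htT))

theorem integral_eq_initial (sol : ClassicalSolutionII a S ε T h hx hxx hxxx hxxxx ht)
    (hS : S ≠ 0) (ha : a ≠ 0)
    (hbc : ∀ t ∈ Icc 0 T, ModelIIBoundaryCondition a S hx hxxx t) :
    ∀ t ∈ Icc 0 T, ∫ x in (-a)..a, h x t = ∫ x in (-a)..a, h x 0 := by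
  have hderiv : ∀ t ∈ Icc 0 T, HasDerivWithinAt (fun t => ∫ x in (-a)..a, h x t) 0 (Icc 0 T) t := by
    intro t htT
    have hdiff : ∀ s ∈ Icc 0 T, (∫ x in (-a)..a, h x s) - ∫ x in (-a)..a, h x t
        = ∫ x in (-a)..a, (h x s - h x t) * 1 := fun s hs => by
      rw [← intervalIntegral.integral_sub
        ((continuous_slice_of_continuousOn sol.cont_h hs).intervalIntegrable _ _)
        ((continuous_slice_of_continuousOn sol.cont_h htT).intervalIntegrable _ _)]
      simp only [mul_one]
    simpa [sol.integral_ht_eq_zero hS ha htT (hbc t htT)] using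
      hasDerivWithinAt_of_sub_eq_integral htT sol.cont_h sol.deriv_ht sol.cont_ht
        continuousOn_const hdiff
  exact constant_of_has_deriv_right_zero (fun t htT => (hderiv t htT).continuousWithinAt)
    fun t htT => (hderiv t (Ico_subset_Icc_self htT)).mono_of_mem_nhdsWithin
      (Icc_mem_nhdsGE_of_mem htT)

theorem integral_sq_le (sol : ClassicalSolutionII a S ε T h hx hxx hxxx hxxxx ht)
    (ha : 0 < a) (htT : t ∈ Icc 0 T) :
    ∫ x in (-a)..a, h x t ^ 2 ≤ (2 * a / π) ^ 2 * (∫ x in (-a)..a, hx x t ^ 2)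
      + (∫ x in (-a)..a, h x t) ^ 2 / (2 * a) := by
  have := integral_sq_le_of_periodic (b := -a) (by linarith) (fun x => sol.deriv_hx x t htT)
    (continuous_slice_of_continuousOn sol.cont_hx htT) (sol.periodic_x · t)
  rwa [show -a + 2 * a = a by ring] at this

end ClassicalSolutionII

/-- Global-in-time uniform `H¹` bound for regularized Model II on a domain with
`a < π/2`: there is `A* > 0` depending only on `a`, `S`, the initial energy `𝓔̃(h(·,0))`
and the mass `M`, bounding `∫ h_x²` and `∫ h²` uniformly in `t`, `T`, and `ε`. -/
theorem modelII_global_estimate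
    (a S E0 M : ℝ) (ha : 0 < a) (ha2 : a < Real.pi / 2) (hS : 0 < S) :
    ∃ Astar : ℝ, 0 < Astar ∧
      ∀ ε T : ℝ, 0 < ε → 0 < T →
      ∀ h hx hxx hxxx hxxxx ht : ℝ → ℝ → ℝ,
        ClassicalSolutionII a S ε T h hx hxx hxxx hxxxx ht →
        (∀ x : ℝ, ∀ t ∈ Set.Icc (0:ℝ) T, 0 ≤ h x t) →
        (∀ t ∈ Set.Icc (0:ℝ) T,
          a * (hx a t + hxxx a t + 2 / (3 * S))
            + a * (hx (-a) t + hxxx (-a) t + 2 / (3 * S)) = 0) →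
        (1/2) * (∫ x in (-a)..a,
            ((hx x 0)^2 - (h x 0)^2 - (4 / (3 * S)) * x * h x 0)) = E0 →
        (∫ x in (-a)..a, h x 0) = M →
        ∀ t ∈ Set.Icc (0:ℝ) T,
          (∫ x in (-a)..a, (hx x t)^2) ≤ Astar ∧
          (∫ x in (-a)..a, (h x t)^2) ≤ (2 * a / Real.pi)^2 * Astar + M^2 / (2 * a) := by
  set c := (2 * a / π) ^ 2
  have hc : c < 1 := by
    have : 2 * a / π < 1 := (div_lt_one pi_pos).2 (by linarith)
    exact (sq_lt_one_iff₀ (by positivity)).2 this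
  set K := 2 * E0 + M ^ 2 / (2 * a) + 4 / (3 * S) * (a * M)
  refine ⟨max (K / (1 - c)) 1, lt_max_of_lt_right one_pos, ?_⟩
  intro ε T hε hT h hx hxx hxxx hxxxx ht sol hpos hbc hE0 hM t htT
  have hE : modelIIEnergy a S h hx t ≤ E0 :=
    hE0 ▸ sol.modelIIEnergy_antitoneOn hS hε.le ha hpos hbc ⟨le_rfl, hT.le⟩ htT htT.1
  have hmass : ∫ x in (-a)..a, h x t = M :=
    (sol.integral_eq_initial hS.ne' ha.ne' hbc t htT).trans hM
  have hh := continuous_slice_of_continuousOn sol.cont_h htT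
  have h2E := two_mul_modelIIEnergy (S := S) (a := a) hh
    (continuous_slice_of_continuousOn sol.cont_hx htT)
  have hP := sol.integral_sq_le ha htT
  have hX := mul_le_mul_of_nonneg_left
    (integral_id_mul_le_mul_integral (b := -a) (d := a) (by linarith) hh fun x _ => hpos x t htT)
    (by positivity : 0 ≤ 4 / (3 * S))
  rw [hmass] at hP hX
  have hD : ∫ x in (-a)..a, hx x t ^ 2 ≤ K / (1 - c) := by
    rw [le_div_iff₀ (by linarith)]
    linarith
  exact ⟨hD.trans (le_max_left _ _), hP.trans (by gcongr; exact hD.trans (le_max_left _ _))⟩
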